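/- arXiv:1506.08011 — 8 statements merged into one kernel-verified Lean document; each statement's English description precedes it below -/
import Mathlib

section
/- Let q be a nonzero complex number that is not a root of unity, and let p be a Laurent polynomial in n variables over ℂ. If p(q^{r_1}, ..., q^{r_n}) = 0 for all natural numbers r_1, ..., r_n, then p = 0. -/
/-!
For a multi-index `e`, the map `r ↦ ∏ i, (q ^ r i) ^ e i` is a monoid homomorphism from the
additive monoid `ι → ℕ` to `K`, i.e. a character; the hypothesis says that `p` is a linear relation
between these characters. When `q` is nonzero and of infinite order, distinct multi-indices give
distinct characters (evaluate at the unit vectors), so Dedekind's linear independence of characters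
forces every coefficient of `p` to vanish.
-/

open Function

lemma zpow_right_injective_of_not_isOfFinOrder {G₀ : Type*} [GroupWithZero G₀] {x : G₀}
    (hx₀ : x ≠ 0) (hx : ¬IsOfFinOrder x) : Injective fun n : ℤ => x ^ n := by
  intro a b (hab : x ^ a = x ^ b)
  by_contra hne
  refine hx (isOfFinOrder_iff_zpow_eq_one.2 ⟨a - b, sub_ne_zero.2 hne, ?_⟩)
  rw [zpow_sub₀ hx₀, hab, div_self (zpow_ne_zero _ hx₀)]

section PowChar

variable {ι K : Type*} [Fintype ι]

def powChar [DivisionCommMonoid K] (q : K) (e : ι →₀ ℤ) : Multiplicative (ι → ℕ) →* K where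
  toFun r := ∏ i, (q ^ r.toAdd i) ^ e i
  map_one' := by simp
  map_mul' r s := by
    simp only [toAdd_mul, Pi.add_apply, pow_add, mul_zpow, Finset.prod_mul_distrib]

lemma powChar_ofAdd [DivisionCommMonoid K] (q : K) (e : ι →₀ ℤ) (r : ι → ℕ) :
    powChar q e (Multiplicative.ofAdd r) = ∏ i, (q ^ r i) ^ e i :=
  rfl

lemma powChar_ofAdd_single [DivisionCommMonoid K] [DecidableEq ι] (q : K) (e : ι →₀ ℤ) (i : ι) :
    powChar q e (Multiplicative.ofAdd (Pi.single i 1)) = q ^ e i := by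
  rw [powChar_ofAdd, Fintype.prod_eq_single i fun j hj => by simp [hj]]
  simp

lemma powChar_injective [CommGroupWithZero K] {q : K} (hq₀ : q ≠ 0) (hq : ¬IsOfFinOrder q) :
    Injective (powChar (ι := ι) q) := by
  classical
  intro e e' h
  ext i
  apply zpow_right_injective_of_not_isOfFinOrder hq₀ hq
  simpa only [powChar_ofAdd_single] using
    DFunLike.congr_fun h (Multiplicative.ofAdd (Pi.single i 1))

lemma linearIndependent_powChar [Field K] {q : K} (hq₀ : q ≠ 0) (hq : ¬IsOfFinOrder q) :
    LinearIndependent K fun e : ι →₀ ℤ => ⇑(powChar q e) :=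
  (linearIndependent_monoidHom _ K).comp _ (powChar_injective hq₀ hq)

theorem Finsupp.eq_zero_of_sum_mul_prod_pow_eq_zero [Field K] {q : K} (hq₀ : q ≠ 0)
    (hq : ¬IsOfFinOrder q) (p : (ι →₀ ℤ) →₀ K)
    (h : ∀ r : ι → ℕ, (p.sum fun e c => c * ∏ i, (q ^ r i) ^ e i) = 0) : p = 0 := by
  have hcomb : Finsupp.linearCombination K (fun e : ι →₀ ℤ => ⇑(powChar q e)) p = 0 := by
    funext r
    rw [Finsupp.linearCombination_apply, Finsupp.sum, Finset.sum_apply]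
    exact h r.toAdd
  have hli := linearIndependent_powChar (ι := ι) hq₀ hq
  rw [linearIndependent_iff] at hli
  exact hli p hcomb

end PowChar

/-- Let `q` be a nonzero complex number that is not a root of unity, and let
`p` be a Laurent polynomial in `n` variables over `ℂ` (modelled as a finitely supported
function from exponent vectors in `Fin n →₀ ℤ` to coefficients in `ℂ`).  If
`p(q^{r 1}, ..., q^{r n}) = 0` for all natural numbers `r 1, ..., r n`, then `p = 0`. -/
theorem laurent_vanishing_on_powers (n : ℕ) (q : ℂ) (hq : q ≠ 0)
    (hroot : ∀ k : ℕ, 0 < k → q ^ k ≠ 1)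
    (p : (Fin n →₀ ℤ) →₀ ℂ)
    (h : ∀ r : Fin n → ℕ,
      (p.sum fun e c => c * ∏ i : Fin n, (q ^ (r i)) ^ (e i)) = 0) :
    p = 0 := by
  have hinf : ¬IsOfFinOrder q := fun hfin =>
    let ⟨k, hk, hqk⟩ := hfin.exists_pow_eq_one
    hroot k hk hqk
  exact Finsupp.eq_zero_of_sum_mul_prod_pow_eq_zero hq hinf p h
end

section
/- Let q ∈ ℂ* be a nonzero complex number that is not a root of unity and let f be a nonzero Laurent polynomial in n variables over ℂ. Then there exist b_1, ..., b_n ∈ ℂ* such that f(q^{i_1} b_1, ..., q^{i_n} b_n) ≠ 0 for all integers i_1, ..., i_n. -/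
open Finset Polynomial

/-!
Choose an integer weight `w` that is injective on the exponents of `f` and put `b j = t ^ w j`.
For each shift `i`, `f (q ^ i * b)` is then a one-variable Laurent polynomial in `t` whose
exponents are distinct and whose coefficients do not all vanish, so it has finitely many zeros
in `ℂ*`. There are only countably many shifts, and `ℂ` is uncountable, so some `t` avoids all
these zeros.
-/

theorem prod_zpow_eq_zpow_sum₀ {ι G : Type*} [CommGroupWithZero G] {t : G} (ht : t ≠ 0)
    (s : Finset ι) (g : ι → ℤ) : ∏ j ∈ s, t ^ g j = t ^ ∑ j ∈ s, g j := by
  classical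
  induction s using Finset.induction_on with
  | empty => simp
  | insert a s ha ih => rw [prod_insert ha, sum_insert ha, zpow_add₀ ht, ih]

theorem prod_zpow_zpow_eq_zpow_weight {ι G : Type*} [Fintype ι] [CommGroupWithZero G] {t : G}
    (ht : t ≠ 0) (w : ι → ℤ) (e : ι →₀ ℤ) :
    ∏ j, (t ^ w j) ^ e j = t ^ Finsupp.weight w e := by
  simp only [Finsupp.weight_eq_sum, smul_eq_mul, ← prod_zpow_eq_zpow_sum₀ ht, ← zpow_mul, mul_comm]

theorem sum_C_mul_X_pow_ne_zero {R α : Type*} [Semiring R] {s : Finset α} {n : α → ℕ}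
    (hn : Set.InjOn n s) {c : α → R} {a : α} (ha : a ∈ s) (hca : c a ≠ 0) :
    ∑ b ∈ s, C (c b) * X ^ n b ≠ 0 := by
  classical
  refine ne_of_apply_ne (coeff · (n a)) ?_
  rw [finsetSum_coeff, sum_eq_single_of_mem a ha fun b hb hba => ?_]
  · simpa using hca
  · simp [hn.ne ha hb hba.symm]

theorem finite_setOf_sum_mul_zpow_eq_zero {K α : Type*} [Field K] {s : Finset α} {w : α → ℤ}
    (hw : Set.InjOn w s) {c : α → K} (hc : ∃ a ∈ s, c a ≠ 0) :
    {t : K | t ≠ 0 ∧ ∑ a ∈ s, c a * t ^ w a = 0}.Finite := by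
  obtain ⟨a, ha, hca⟩ := hc
  obtain ⟨k, hk⟩ := (s.image w).bddBelow
  have hk_le : ∀ b ∈ s, k ≤ w b := fun b hb => hk (mem_coe.mpr (mem_image_of_mem w hb))
  set n : α → ℕ := fun b => (w b - k).toNat
  have hn : ∀ b ∈ s, (n b : ℤ) = w b - k := fun b hb =>
    Int.toNat_of_nonneg (by linarith [hk_le b hb])
  have hninj : Set.InjOn n s := fun b hb b' hb' h =>
    hw hb hb' (by linarith [hn b hb, hn b' hb', congrArg (Nat.cast (R := ℤ)) h])
  refine (finite_setOfPred_isRoot (sum_C_mul_X_pow_ne_zero hninj ha hca)).subset ?_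
  rintro t ⟨ht, hsum⟩
  have : t ^ k * ∑ b ∈ s, c b * t ^ n b = ∑ b ∈ s, c b * t ^ w b := by
    rw [mul_sum]
    refine sum_congr rfl fun b hb => ?_
    rw [← zpow_natCast, hn b hb, mul_left_comm, ← zpow_add₀ ht, add_sub_cancel]
  simpa [IsRoot, eval_finsetSum, ← this, zpow_ne_zero k ht] using hsum

theorem exists_weight_injOn {ι : Type*} [Fintype ι] (S : Finset (ι →₀ ℤ)) :
    ∃ w : ι → ℤ, Set.InjOn (Finsupp.weight w) (S : Set (ι →₀ ℤ)) := by
  classical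
  let σ := Fintype.equivFin ι
  let p : (ι →₀ ℤ) → ℤ[X] := fun e => ∑ j, C (e j) * X ^ (σ j : ℕ)
  have eval_p : ∀ x e, (p e).eval x = Finsupp.weight (fun j => x ^ (σ j : ℕ)) e := by
    intro x e
    simp [p, Finsupp.weight_eq_sum, eval_finsetSum]
  have p_injective : Function.Injective p := by
    intro e e' h
    ext j
    simpa [p, finsetSum_coeff, coeff_C_mul_X_pow, Fin.val_eq_val, σ.injective.eq_iff] using
      congrArg (coeff · (σ j : ℕ)) h
  have hfin : (⋃ d ∈ S.offDiag, {x : ℤ | (p d.1 - p d.2).IsRoot x}).Finite :=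
    S.offDiag.finite_toSet.biUnion fun d hd =>
      finite_setOfPred_isRoot (sub_ne_zero.mpr (p_injective.ne (mem_offDiag.mp hd).2.2))
  obtain ⟨x, hx⟩ := hfin.infinite_compl.nonempty
  refine ⟨fun j => x ^ (σ j : ℕ), fun e he e' he' h => by_contra fun hne => hx ?_⟩
  exact Set.mem_biUnion (x := (e, e')) (mem_offDiag.mpr ⟨he, he', hne⟩)
    (by simp [IsRoot, eval_p, h])

theorem exists_forall_sum_mul_prod_zpow_ne_zero {K ι κ : Type*} [Field K] [Uncountable K]
    [Fintype ι] [Countable κ] (S : Finset (ι →₀ ℤ)) (c : κ → (ι →₀ ℤ) → K)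
    (hc : ∀ k, ∃ e ∈ S, c k e ≠ 0) :
    ∃ b : ι → K, (∀ j, b j ≠ 0) ∧ ∀ k, ∑ e ∈ S, c k e * ∏ j, b j ^ e j ≠ 0 := by
  obtain ⟨w, hw⟩ := exists_weight_injOn S
  have hcount :
      ({0} ∪ ⋃ k, {t : K | t ≠ 0 ∧ ∑ e ∈ S, c k e * t ^ Finsupp.weight w e = 0}).Countable :=
    (Set.countable_singleton 0).union
      (Set.countable_iUnion fun k => (finite_setOf_sum_mul_zpow_eq_zero hw (hc k)).countable)
  obtain ⟨t, ht⟩ : ∃ t, t ∉ _ := by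
    by_contra! h
    exact Set.not_countable_univ (hcount.mono fun t _ => h t)
  have ht0 : t ≠ 0 := fun h => ht (Or.inl h)
  refine ⟨fun j => t ^ w j, fun j => zpow_ne_zero _ ht0, fun k hk => ht (Or.inr ?_)⟩
  simp only [prod_zpow_zpow_eq_zpow_weight ht0] at hk
  exact Set.mem_iUnion.mpr ⟨k, ht0, hk⟩

theorem exists_point_nonvanishing_on_q_orbit_general (n : ℕ) (q : ℂ) (hq : q ≠ 0)
    (f : (Fin n →₀ ℤ) →₀ ℂ) (hf : f ≠ 0) :
    ∃ b : Fin n → ℂ, (∀ j, b j ≠ 0) ∧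
      ∀ i : Fin n → ℤ,
        (f.sum fun e c => c * ∏ j : Fin n, (q ^ (i j) * b j) ^ (e j)) ≠ 0 := by
  have : Uncountable ℂ := Set.not_countable_univ_iff.mp not_countable_complex
  obtain ⟨e₀, he₀⟩ := Finsupp.support_nonempty_iff.mpr hf
  have hq_pow : ∀ (i : Fin n → ℤ) (e : Fin n →₀ ℤ), ∏ j, (q ^ i j) ^ e j ≠ 0 := fun i e =>
    prod_ne_zero_iff.mpr fun j _ => zpow_ne_zero _ (zpow_ne_zero _ hq)
  obtain ⟨b, hb, hfb⟩ := exists_forall_sum_mul_prod_zpow_ne_zero f.support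
    (fun i e => f e * ∏ j, (q ^ i j) ^ e j)
    fun i => ⟨e₀, he₀, mul_ne_zero (Finsupp.mem_support_iff.mp he₀) (hq_pow i e₀)⟩
  refine ⟨b, hb, fun i => ?_⟩
  convert hfb i using 1
  simp only [Finsupp.sum, mul_zpow, prod_mul_distrib, mul_assoc]

/-- Let `q ∈ ℂ*` not be a root of unity and let `f` be a nonzero Laurent
polynomial in `n` variables over `ℂ` (modelled as a finitely supported function from
exponent vectors in `Fin n →₀ ℤ` to coefficients in `ℂ`).  Then there exist nonzero
`b 1, ..., b n ∈ ℂ*` such that `f(q^{i 1} * b 1, ..., q^{i n} * b n) ≠ 0` for all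
integers `i 1, ..., i n`. -/
theorem exists_point_nonvanishing_on_q_orbit (n : ℕ) (q : ℂ) (hq : q ≠ 0)
    (hroot : ∀ k : ℕ, 0 < k → q ^ k ≠ 1)
    (f : (Fin n →₀ ℤ) →₀ ℂ) (hf : f ≠ 0) :
    ∃ b : Fin n → ℂ, (∀ j, b j ≠ 0) ∧
      ∀ i : Fin n → ℤ,
        (f.sum fun e c => c * ∏ j : Fin n, (q ^ (i j) * b j) ^ (e j)) ≠ 0 :=
  exists_point_nonvanishing_on_q_orbit_general n q hq f hf
end

section
/- Let R be a (possibly noncommutative) ring containing an invertible central element q with q − q^{−1} invertible, and let e, y, w ∈ R satisfy e·y − y·e = w and w·y = q^2·y·w. Then for every positive integer a, e·y^a = y^a·e + q^{a−1}·[a]·y^{a−1}·w, where [a] = (q^a − q^{−a})/(q − q^{−1}). -/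
/-!
Commuting `e` past one factor of `y` produces one copy of `w`, and moving that `w` further
right past each remaining `y` multiplies it by `q²`. So
`e y^a = y^a e + (1 + q² + ⋯ + q^(2(a-1))) y^(a-1) w`, and the geometric sum
`∑_{i<a} q^(2i)` equals `q^(a-1) [a]` because
`(q - q⁻¹) ∑_{i<a} q^(2i) = q^(2a-1) - q⁻¹ = q^(a-1) (q^a - q^(-a))`.
-/

open Finset

theorem mul_pow_succ_eq_pow_succ_mul_add_geom_sum {R : Type*} [Ring R] {e y w c : R}
    (hey : e * y = y * e + w) (hwy : w * y = c * (y * w)) (hcy : Commute c y) (n : ℕ) :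
    e * y ^ (n + 1) = y ^ (n + 1) * e + (∑ i ∈ range (n + 1), c ^ i) * (y ^ n * w) := by
  induction n with
  | zero => simpa using hey
  | succ n ih =>
    have hw_past : y ^ n * w * y = c * (y ^ (n + 1) * w) := by
      rw [mul_assoc, hwy, ← mul_assoc, ← (hcy.pow_right n).eq, pow_succ, mul_assoc, mul_assoc]
    have hc_sum : Commute c (∑ i ∈ range (n + 1), c ^ i) :=
      Commute.sum_right _ _ _ fun i _ => Commute.self_pow c i
    calc e * y ^ (n + 1 + 1)
        = (y ^ (n + 1) * e + (∑ i ∈ range (n + 1), c ^ i) * (y ^ n * w)) * y := by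
          rw [pow_succ _ (n + 1), ← mul_assoc, ih]
      _ = y ^ (n + 1) * (e * y) + (∑ i ∈ range (n + 1), c ^ i) * (y ^ n * w * y) := by
          simp only [add_mul, mul_assoc]
      _ = y ^ (n + 1 + 1) * e + (c * ∑ i ∈ range (n + 1), c ^ i + 1) * (y ^ (n + 1) * w) := by
          rw [hey, hw_past, ← mul_assoc _ c, ← hc_sum.eq, pow_succ _ (n + 1)]
          noncomm_ring
      _ = y ^ (n + 1 + 1) * e + (∑ i ∈ range (n + 1 + 1), c ^ i) * (y ^ (n + 1) * w) := by
          rw [← geom_sum_succ]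

theorem Units.pow_mul_sub_inv_pow_eq_geom_sum_mul {R : Type*} [Ring R] (q : Rˣ) (n : ℕ) :
    (q : R) ^ n * ((q : R) ^ (n + 1) - ((q⁻¹ : Rˣ) : R) ^ (n + 1))
      = (∑ i ∈ range (n + 1), ((q : R) ^ 2) ^ i) * ((q : R) - ((q⁻¹ : Rˣ) : R)) := by
  have hlhs : (q : R) ^ n * ((q⁻¹ : Rˣ) : R) ^ (n + 1) = ((q⁻¹ : Rˣ) : R) := by
    rw [← Units.val_pow_eq_pow_val, ← Units.val_pow_eq_pow_val, ← Units.val_mul]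
    congr 1
    group
  have hfactor : (q : R) - ((q⁻¹ : Rˣ) : R) = ((q : R) ^ 2 - 1) * ((q⁻¹ : Rˣ) : R) := by
    rw [sub_mul, one_mul, sq, mul_assoc, Units.mul_inv, mul_one]
  rw [hfactor, ← mul_assoc, geom_sum_mul, mul_sub, hlhs, sub_mul, one_mul, ← pow_mul,
    ← pow_add, show 2 * (n + 1) = n + (n + 1) + 1 by ring, pow_succ, mul_assoc, Units.mul_inv,
    mul_one]

/-- Let `R` be a (possibly noncommutative) ring containing an invertible
central element `q` with `q - q⁻¹` invertible (witnessed by a unit `u`), and let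
`e, y, w ∈ R` satisfy `e·y - y·e = w` and `w·y = q²·y·w`.  Then for every positive
integer `a`, `e·y^a = y^a·e + q^(a-1)·[a]·y^(a-1)·w`, where
`[a] = (q^a - q^(-a))·(q - q⁻¹)⁻¹`. -/
theorem q_commutation_E_power (R : Type*) [Ring R] (q u : Rˣ)
    (hcentral : ∀ r : R, (q : R) * r = r * q)
    (hu : (u : R) = (q : R) - ((q⁻¹ : Rˣ) : R))
    (e y w : R)
    (hey : e * y - y * e = w)
    (hwy : w * y = (q : R) ^ 2 * (y * w))
    (a : ℕ) (ha : 0 < a) :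
    e * y ^ a = y ^ a * e
      + (q : R) ^ (a - 1) * ((((q : R) ^ a - ((q⁻¹ : Rˣ) : R) ^ a) * ((u⁻¹ : Rˣ) : R))
          * (y ^ (a - 1) * w)) := by
  obtain ⟨n, rfl⟩ : ∃ n, a = n + 1 := Nat.exists_eq_add_one_of_ne_zero ha.ne'
  have hey_add : e * y = y * e + w := by rw [← hey, add_sub_cancel]
  have hq2y : Commute ((q : R) ^ 2) y := Commute.pow_left (hcentral y) 2
  have hqint :
      (q : R) ^ n * (((q : R) ^ (n + 1) - ((q⁻¹ : Rˣ) : R) ^ (n + 1)) * ((u⁻¹ : Rˣ) : R))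
        = ∑ i ∈ range (n + 1), ((q : R) ^ 2) ^ i := by
    rw [← mul_assoc, Units.pow_mul_sub_inv_pow_eq_geom_sum_mul, ← hu, mul_assoc, Units.mul_inv,
      mul_one]
  rw [Nat.add_sub_cancel, ← mul_assoc, hqint]
  exact mul_pow_succ_eq_pow_succ_mul_add_geom_sum hey_add hwy hq2y n
end

section
/- Let q, μ, c be nonzero complex numbers with q^2 ≠ 1. Then there exists b ∈ ℂ* such that c = (q − q^{−1})^{−2}·(b − b^{−1})·(q·b^{−1}·μ − q^{−1}·b·μ^{−1}). -/
open Polynomial in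
theorem IsAlgClosed.exists_ne_zero_quadratic_eq_zero {K : Type*} [Field K] [IsAlgClosed K]
    (s p : K) (hp : p ≠ 0) : ∃ x : K, x ≠ 0 ∧ x ^ 2 - s * x + p = 0 := by
  have hdeg : degree (X ^ 2 - C s * X + C p) = 2 := by compute_degree!
  obtain ⟨x, hx⟩ := IsAlgClosed.exists_root (X ^ 2 - C s * X + C p) (by rw [hdeg]; decide)
  simp only [IsRoot, eval_add, eval_sub, eval_mul, eval_pow, eval_X, eval_C] at hx
  refine ⟨x, fun hx0 => hp ?_, hx⟩
  simpa [hx0] using hx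

-- Substituting `x = b ^ 2` and clearing denominators turns the equation into a monic quadratic
-- in `x` with constant term `q ^ 2 * μ ^ 2 ≠ 0`, so it has a nonzero root.
theorem exists_twist_parameter_general (q μ c : ℂ) (hq : q ≠ 0) (hμ : μ ≠ 0)
    (hq2 : q ^ 2 ≠ 1) :
    ∃ b : ℂ, b ≠ 0 ∧
      c = ((q - q⁻¹) ^ 2)⁻¹ * (b - b⁻¹) * (q * b⁻¹ * μ - q⁻¹ * b * μ⁻¹) := by
  obtain ⟨x, hx0, hx⟩ := IsAlgClosed.exists_ne_zero_quadratic_eq_zero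
    (1 + q ^ 2 * μ ^ 2 - c * (q ^ 2 - 1) ^ 2 * μ / q) (q ^ 2 * μ ^ 2) (by positivity)
  obtain ⟨b, rfl⟩ := IsAlgClosed.exists_eq_mul_self x
  have hb : b ≠ 0 := fun h => hx0 (by simp [h])
  have hq21 : q ^ 2 - 1 ≠ 0 := sub_ne_zero.mpr hq2
  refine ⟨b, hb, ?_⟩
  rw [show q - q⁻¹ = (q ^ 2 - 1) / q by field_simp]
  field_simp at hx ⊢
  linear_combination hx

/-- Let `q, μ, c` be nonzero complex numbers with `q^2 ≠ 1`.  Then there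
exists `b ∈ ℂ*` such that
`c = (q - q⁻¹)⁻² · (b - b⁻¹) · (q·b⁻¹·μ - q⁻¹·b·μ⁻¹)`. -/
theorem exists_twist_parameter (q μ c : ℂ) (hq : q ≠ 0) (hμ : μ ≠ 0) (hc : c ≠ 0)
    (hq2 : q ^ 2 ≠ 1) :
    ∃ b : ℂ, b ≠ 0 ∧
      c = ((q - q⁻¹) ^ 2)⁻¹ * (b - b⁻¹) * (q * b⁻¹ * μ - q⁻¹ * b * μ⁻¹) :=
  exists_twist_parameter_general q μ c hq hμ hq2
end

section
/- Let q, b, λ ∈ ℂ* with q^2 ≠ 1 and let V be a complex vector space with basis (v_i)_{i∈ℤ}. Define linear operators F, K, K', E on V by F v_i = v_{i+1}, K v_i = q^{−2i} b^{−2} λ v_i, K' v_i = q^{2i} b^{2} λ^{−1} v_i, and E v_i = (q^i b − q^{−i} b^{−1})(q^{1−i} b^{−1} λ − q^{i−1} b λ^{−1})/(q − q^{−1})^2 · v_{i−1}. Then K K' = K' K = id, K E = q^2 E K, K F = q^{−2} F K, and E F − F E = (K − K')/(q − q^{−1}). -/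
/-!
Each operator either scales every basis vector `v i` (`K`, `K'`) or moves it to `v (i ± 1)`
(`F`, `E`), so each relation is an identity of coefficients at every `i`: the weights of `K` and
`K'` are reciprocal, the weight of `K` picks up `q ^ (∓2)` when `i` moves by `±1`, and `E F - F E`
scales `v i` by `e (i + 1) - e i`, where `e` is the coefficient of `E`, which is
`(K-weight - K'-weight) / (q - q⁻¹)` as an identity of Laurent polynomials in `q ^ i, q, b, λ`.
-/

open Module

section Basis

variable {ι R V : Type*} [CommSemiring R] [AddCommMonoid V] [Module R V] (v : Basis ι R V)

theorem comp_eq_id_of_diagonal {A B : V →ₗ[R] V} {a b : ι → R}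
    (hA : ∀ i, A (v i) = a i • v i) (hB : ∀ i, B (v i) = b i • v i) (hab : ∀ i, a i * b i = 1) :
    A ∘ₗ B = LinearMap.id :=
  v.ext fun i => by
    simp only [LinearMap.comp_apply, hB, map_smul, hA, smul_smul, mul_comm (b i), hab, one_smul,
      LinearMap.id_apply]

theorem diagonal_comp_shift {D S : V →ₗ[R] V} {d e : ι → R} {σ : ι → ι} {c : R}
    (hD : ∀ i, D (v i) = d i • v i) (hS : ∀ i, S (v i) = e i • v (σ i))
    (hc : ∀ i, d (σ i) = c * d i) :
    D ∘ₗ S = c • (S ∘ₗ D) :=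
  v.ext fun i => by
    simp only [LinearMap.comp_apply, LinearMap.smul_apply, hS, hD, map_smul, smul_smul, hc]
    ring_nf

end Basis

theorem commutator_lower_raise {R V : Type*} [CommRing R] [AddCommGroup V] [Module R V]
    (v : Basis ℤ R V) {E F D : V →ₗ[R] V} {e d : ℤ → R}
    (hE : ∀ i, E (v i) = e i • v (i - 1)) (hF : ∀ i, F (v i) = v (i + 1))
    (hD : ∀ i, D (v i) = d i • v i) (hd : ∀ i, e (i + 1) - e i = d i) :
    E ∘ₗ F - F ∘ₗ E = D :=
  v.ext fun i => by
    simp only [LinearMap.sub_apply, LinearMap.comp_apply, hF, hE, map_smul, add_sub_cancel_right,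
      sub_add_cancel, ← sub_smul, hd, hD]

section Weights

variable {𝕜 : Type*} [Field 𝕜] (q b lam : 𝕜)

def kWeight (i : ℤ) : 𝕜 := q ^ (-2 * i) * b⁻¹ ^ 2 * lam

def kWeight' (i : ℤ) : 𝕜 := q ^ (2 * i) * b ^ 2 * lam⁻¹

def eCoeff (i : ℤ) : 𝕜 :=
  (q ^ i * b - q ^ (-i) * b⁻¹) * (q ^ (1 - i) * b⁻¹ * lam - q ^ (i - 1) * b * lam⁻¹) /
    (q - q⁻¹) ^ 2

variable {q b lam}

theorem kWeight_mul_kWeight' (hq : q ≠ 0) (hb : b ≠ 0) (hlam : lam ≠ 0) (i : ℤ) :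
    kWeight q b lam i * kWeight' q b lam i = 1 := by
  have := zpow_ne_zero i hq
  simp only [kWeight, kWeight', neg_mul, zpow_neg, zpow_mul', zpow_two]
  field_simp

theorem kWeight_sub_one (hq : q ≠ 0) (i : ℤ) :
    kWeight q b lam (i - 1) = q ^ 2 * kWeight q b lam i := by
  rw [kWeight, kWeight, show -2 * (i - 1) = -2 * i + 2 by ring, zpow_add₀ hq, zpow_ofNat]
  ring

theorem kWeight_add_one (hq : q ≠ 0) (i : ℤ) :
    kWeight q b lam (i + 1) = (q ^ 2)⁻¹ * kWeight q b lam i := by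
  rw [kWeight, kWeight, show -2 * (i + 1) = -2 * i + -2 by ring, zpow_add₀ hq, zpow_neg,
    zpow_ofNat]
  ring

theorem sub_inv_ne_zero_of_sq_ne_one (hq : q ≠ 0) (hq2 : q ^ 2 ≠ 1) : q - q⁻¹ ≠ 0 := by
  intro h
  apply hq2
  field_simp at h
  linear_combination h

theorem eCoeff_add_one_sub_eCoeff (hq : q ≠ 0) (hb : b ≠ 0) (hlam : lam ≠ 0) (hq2 : q ^ 2 ≠ 1)
    (i : ℤ) :
    eCoeff q b lam (i + 1) - eCoeff q b lam i =
      (q - q⁻¹)⁻¹ * (kWeight q b lam i - kWeight' q b lam i) := by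
  have := sub_inv_ne_zero_of_sq_ne_one hq hq2
  have := zpow_ne_zero i hq
  simp only [eCoeff, kWeight, kWeight', show (1 : ℤ) - (i + 1) = -i by ring, add_sub_cancel_right,
    zpow_add₀ hq, zpow_sub₀ hq, neg_mul, zpow_neg, zpow_mul', zpow_two, zpow_one]
  field_simp
  ring

end Weights

/-- Let `q, b, λ ∈ ℂ*` with `q^2 ≠ 1` and let `V` be a complex vector
space with basis `(v i)_{i ∈ ℤ}`.  Define linear operators `F, K, K', E` on `V` by
`F v_i = v_{i+1}`, `K v_i = q^{-2i} b^{-2} λ v_i`, `K' v_i = q^{2i} b^2 λ⁻¹ v_i`, and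
`E v_i = (q^i b - q^{-i} b⁻¹)(q^{1-i} b⁻¹ λ - q^{i-1} b λ⁻¹)/(q - q⁻¹)^2 · v_{i-1}`.
Then `K K' = K' K = id`, `K E = q^2 E K`, `K F = q^{-2} F K`, and
`E F - F E = (K - K')/(q - q⁻¹)`. -/
theorem twisted_sl2_module_relations (q b lam : ℂ)
    (hq : q ≠ 0) (hb : b ≠ 0) (hlam : lam ≠ 0) (hq2 : q ^ 2 ≠ 1)
    (V : Type*) [AddCommGroup V] [Module ℂ V] (v : Module.Basis ℤ ℂ V)
    (F K K' E : V →ₗ[ℂ] V)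
    (hF : ∀ i : ℤ, F (v i) = v (i + 1))
    (hK : ∀ i : ℤ, K (v i) = (q ^ (-2 * i) * b⁻¹ ^ 2 * lam) • v i)
    (hK' : ∀ i : ℤ, K' (v i) = (q ^ (2 * i) * b ^ 2 * lam⁻¹) • v i)
    (hE : ∀ i : ℤ, E (v i) =
      ((q ^ i * b - q ^ (-i) * b⁻¹) * (q ^ (1 - i) * b⁻¹ * lam - q ^ (i - 1) * b * lam⁻¹)
        / (q - q⁻¹) ^ 2) • v (i - 1)) :
    K ∘ₗ K' = LinearMap.id ∧ K' ∘ₗ K = LinearMap.id ∧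
    K ∘ₗ E = (q ^ 2) • (E ∘ₗ K) ∧ K ∘ₗ F = (q ^ 2)⁻¹ • (F ∘ₗ K) ∧
    E ∘ₗ F - F ∘ₗ E = (q - q⁻¹)⁻¹ • (K - K') := by
  have hKK' := kWeight_mul_kWeight' hq hb hlam
  have hF' : ∀ i, F (v i) = (1 : ℂ) • v (i + 1) := fun i => by rw [hF, one_smul]
  have hKsub : ∀ i, ((q - q⁻¹)⁻¹ • (K - K')) (v i) =
      ((q - q⁻¹)⁻¹ * (kWeight q b lam i - kWeight' q b lam i)) • v i := fun i => by
    rw [LinearMap.smul_apply, LinearMap.sub_apply, hK, hK', ← sub_smul, smul_smul]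
    rfl
  exact ⟨comp_eq_id_of_diagonal v hK hK' hKK',
    comp_eq_id_of_diagonal v hK' hK fun i => (mul_comm _ _).trans (hKK' i),
    diagonal_comp_shift v hK hE (kWeight_sub_one hq),
    diagonal_comp_shift v hK hF' (kWeight_add_one hq),
    commutator_lower_raise v hE hF hKsub (eCoeff_add_one_sub_eCoeff hq hb hlam hq2)⟩
end

section
/- Let Φ be an irreducible root system with a fixed base Π of simple roots, and let γ ∈ Π. Then the set D(γ) of positive roots whose coefficient of γ (in the expansion in simple roots) is strictly positive generates the root lattice of Φ as a group. -/
open scoped RealInnerProductSpace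

/-- A (finite, crystallographic) root system `Φ` in a real inner product space, together
with a base `B` of simple roots, assumed irreducible (connected Dynkin diagram). -/
structure IrreducibleRootSystemWithBase (V : Type*) [NormedAddCommGroup V]
    [InnerProductSpace ℝ V] (Φ B : Finset V) : Prop where
  zero_not_mem : (0 : V) ∉ Φ
  base_subset : (B : Set V) ⊆ (Φ : Set V)
  base_indep : LinearIndependent ℝ (fun α : B => (α : V))
  reflect_mem : ∀ α ∈ Φ, ∀ β ∈ Φ, β - (2 * ⟪β, α⟫ / ⟪α, α⟫) • α ∈ Φ
  integrality : ∀ α ∈ Φ, ∀ β ∈ Φ, ∃ k : ℤ, 2 * ⟪β, α⟫ / ⟪α, α⟫ = (k : ℝ)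
  base_expand : ∀ β ∈ Φ, ∃ c : V → ℤ,
    β = ∑ α ∈ B, c α • α ∧ ((∀ α ∈ B, 0 ≤ c α) ∨ (∀ α ∈ B, c α ≤ 0))
  irreducible : ∀ B₁ B₂ : Finset V, (B₁ : Set V) ∪ (B₂ : Set V) = (B : Set V) →
    Disjoint (B₁ : Set V) (B₂ : Set V) →
    B₁.Nonempty → B₂.Nonempty → ∃ α ∈ B₁, ∃ α' ∈ B₂, ⟪α, α'⟫ ≠ 0

/-!
Grow a set `F ⊆ B` of simple roots, starting from `{γ}`, such that `∑ F` is a root. Distinct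
simple roots have nonpositive inner product, so by irreducibility some simple root `α ∉ F`
satisfies `⟪α, ∑ F⟫ < 0`, and then `α + ∑ F` is again a root. Both sums lie in `D(γ)`, so
`α` lies in the subgroup it generates; at the end `F = B`.
-/

section Coefficients

variable {M : Type*} [AddCommGroup M] {Φ B F : Finset M}

/-- The set `D(γ)`. -/
def rootsWithPosCoeff (Φ B : Finset M) (γ : M) : Set M :=
  {β | β ∈ Φ ∧ ∃ c : M → ℤ, β = ∑ α ∈ B, c α • α ∧ 0 < c γ}

theorem Finset.sum_ite_mem_zsmul_self [DecidableEq M] (hFB : F ⊆ B) :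
    ∑ α ∈ B, (if α ∈ F then (1 : ℤ) else 0) • α = ∑ α ∈ F, α := by
  simp [ite_smul, Finset.sum_ite_mem, Finset.inter_eq_right.mpr hFB]

theorem sum_mem_rootsWithPosCoeff {γ : M} (hFB : F ⊆ B) (hγ : γ ∈ F)
    (hF : ∑ α ∈ F, α ∈ Φ) : ∑ α ∈ F, α ∈ rootsWithPosCoeff Φ B γ := by
  classical
  exact ⟨hF, fun α => if α ∈ F then 1 else 0, (Finset.sum_ite_mem_zsmul_self hFB).symm,
    by simp [hγ]⟩

end Coefficients

namespace IrreducibleRootSystemWithBase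

variable {V : Type*} [NormedAddCommGroup V] [InnerProductSpace ℝ V] {Φ B : Finset V}

theorem coeff_eq_of_sum_eq (h : IrreducibleRootSystemWithBase V Φ B) {c d : V → ℤ}
    (hcd : ∑ α ∈ B, c α • α = ∑ α ∈ B, d α • α) {α : V} (hα : α ∈ B) : c α = d α := by
  have hzero : ∑ α ∈ B, ((c α - d α : ℤ) : ℝ) • id α = 0 := by
    simp only [id, Int.cast_smul_eq_zsmul, sub_smul, Finset.sum_sub_distrib, hcd, sub_self]
  have hB : LinearIndepOn ℝ id (B : Set V) := h.base_indep
  exact sub_eq_zero.mp (by exact_mod_cast linearIndepOn_finset_iff.mp hB _ hzero α hα)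

theorem sum_ne_zero_of_subset (h : IrreducibleRootSystemWithBase V Φ B) {F : Finset V}
    (hFB : F ⊆ B) (hF : F.Nonempty) : ∑ α ∈ F, α ≠ 0 := by
  classical
  intro hzero
  obtain ⟨α, hα⟩ := hF
  have hcoeff := h.coeff_eq_of_sum_eq (c := fun α => if α ∈ F then 1 else 0) (d := 0)
    (by rw [Finset.sum_ite_mem_zsmul_self hFB, hzero]; simp) (hFB hα)
  simp [hα] at hcoeff

/-- If `⟪a, a'⟫ > 0`, the reflection of `a` in `a'` is `a - k a'` with `k > 0`, a root whose
coefficients `1` and `-k` have opposite signs. -/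
theorem inner_nonpos_of_mem_base (h : IrreducibleRootSystemWithBase V Φ B) {a a' : V}
    (ha : a ∈ B) (ha' : a' ∈ B) (hne : a ≠ a') : ⟪a, a'⟫ ≤ 0 := by
  classical
  by_contra! hpos
  obtain ⟨k, hk⟩ := h.integrality a' (h.base_subset ha') a (h.base_subset ha)
  have ha'a' : 0 < ⟪a', a'⟫ := real_inner_self_pos.mpr (by rintro rfl; simp at hpos)
  have hk_pos : 0 < k := by exact_mod_cast (hk ▸ by positivity : (0 : ℝ) < k)
  have hroot := h.reflect_mem a' (h.base_subset ha') a (h.base_subset ha)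
  rw [hk] at hroot
  obtain ⟨c, hc, hsign⟩ := h.base_expand _ hroot
  have hcoord : ∑ α ∈ B, (Pi.single a 1 - Pi.single a' k : V → ℤ) α • α = a - (k : ℝ) • a' := by
    simp [sub_smul, Finset.sum_sub_distrib, Pi.single_apply, ite_smul, ha, ha',
      Int.cast_smul_eq_zsmul]
  have hca := h.coeff_eq_of_sum_eq (hc ▸ hcoord) ha
  have hca' := h.coeff_eq_of_sum_eq (hc ▸ hcoord) ha'
  simp only [Pi.sub_apply, Pi.single_eq_same, Pi.single_eq_of_ne hne,
    Pi.single_eq_of_ne hne.symm] at hca hca'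
  rcases hsign with hs | hs
  · linarith [hs a' ha']
  · linarith [hs a ha]

theorem add_mem_of_inner_neg (h : IrreducibleRootSystemWithBase V Φ B) {x y : V} (hx : x ∈ Φ)
    (hy : y ∈ Φ) (hxy : ⟪x, y⟫ < 0) (hsum : x + y ≠ 0) : x + y ∈ Φ := by
  obtain ⟨k, hk⟩ := h.integrality y hy x hx
  obtain ⟨l, hl⟩ := h.integrality x hx y hy
  have hxx : 0 < ⟪x, x⟫ := real_inner_self_pos.mpr (by rintro rfl; simp at hxy)
  have hyy : 0 < ⟪y, y⟫ := real_inner_self_pos.mpr (by rintro rfl; simp at hxy)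
  have hyx : ⟪y, x⟫ < 0 := by rwa [real_inner_comm]
  by_cases hk1 : k = -1
  · have hroot := h.reflect_mem y hy x hx
    rw [hk, hk1] at hroot
    simpa using hroot
  by_cases hl1 : l = -1
  · have hroot := h.reflect_mem x hx y hy
    rw [hl, hl1] at hroot
    simpa [add_comm] using hroot
  -- both Cartan integers are now `≤ -2`, which forces `‖x + y‖² ≤ 0`
  have hk2 : 2 * ⟪x, y⟫ / ⟪y, y⟫ ≤ -2 := by
    have : k < 0 := by exact_mod_cast (hk ▸ div_neg_of_neg_of_pos (by linarith) hyy : (k : ℝ) < 0)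
    rw [hk]; exact_mod_cast (by omega : k ≤ -2)
  have hl2 : 2 * ⟪y, x⟫ / ⟪x, x⟫ ≤ -2 := by
    have : l < 0 := by exact_mod_cast (hl ▸ div_neg_of_neg_of_pos (by linarith) hxx : (l : ℝ) < 0)
    rw [hl]; exact_mod_cast (by omega : l ≤ -2)
  rw [div_le_iff₀ hyy] at hk2
  rw [div_le_iff₀ hxx, real_inner_comm] at hl2
  refine absurd (real_inner_self_nonpos.mp ?_) hsum
  rw [inner_add_add_self, real_inner_comm x y]
  linarith

theorem exists_sum_insert_mem [DecidableEq V] (h : IrreducibleRootSystemWithBase V Φ B)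
    {F : Finset V} (hFB : F ⊆ B) (hF : F.Nonempty) (hFne : F ≠ B) (hsum : ∑ α ∈ F, α ∈ Φ) :
    ∃ a ∈ B \ F, ∑ α ∈ insert a F, α ∈ Φ := by
  obtain ⟨α, hαF, a, haS, hαa⟩ := h.irreducible F (B \ F)
    (by rw [← Finset.coe_union, Finset.union_sdiff_of_subset hFB])
    (Finset.disjoint_coe.mpr Finset.disjoint_sdiff) hF
    (Finset.sdiff_nonempty.mpr fun hBF => hFne (hFB.antisymm hBF))
  obtain ⟨haB, haF⟩ := Finset.mem_sdiff.mp haS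
  have hle : ∀ x ∈ F, ⟪a, x⟫ ≤ 0 := fun x hx =>
    h.inner_nonpos_of_mem_base haB (hFB hx) (by rintro rfl; exact haF hx)
  have hinner : ⟪a, ∑ x ∈ F, x⟫ < 0 := by
    rw [inner_sum]
    calc ∑ x ∈ F, ⟪a, x⟫ < ∑ _x ∈ F, (0 : ℝ) :=
          Finset.sum_lt_sum hle ⟨α, hαF, (hle α hαF).lt_of_ne (by rwa [real_inner_comm])⟩
      _ = 0 := Finset.sum_const_zero
  have hsum_ne :=
    h.sum_ne_zero_of_subset (Finset.insert_subset haB hFB) (Finset.insert_nonempty a F)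
  refine ⟨a, haS, ?_⟩
  rw [Finset.sum_insert haF] at hsum_ne ⊢
  exact h.add_mem_of_inner_neg (h.base_subset haB) hsum hinner hsum_ne

/-- Take `F ∋ γ` of maximal size with `∑ F` a root and `F` inside the subgroup generated by
`D(γ)`; by `exists_sum_insert_mem`, `F = B`. -/
theorem base_subset_closure_rootsWithPosCoeff (h : IrreducibleRootSystemWithBase V Φ B)
    {γ : V} (hγ : γ ∈ B) : (B : Set V) ⊆ AddSubgroup.closure (rootsWithPosCoeff Φ B γ) := by
  classical
  set S := AddSubgroup.closure (rootsWithPosCoeff Φ B γ)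
  have hsum_mem_S {F : Finset V} (hFB : F ⊆ B) (hγF : γ ∈ F) (hF : ∑ α ∈ F, α ∈ Φ) :
      ∑ α ∈ F, α ∈ S :=
    AddSubgroup.subset_closure (sum_mem_rootsWithPosCoeff hFB hγF hF)
  let P : Finset V → Prop := fun F => γ ∈ F ∧ ∑ α ∈ F, α ∈ Φ ∧ (F : Set V) ⊆ S
  have hγΦ : γ ∈ Φ := h.base_subset hγ
  have hγS : γ ∈ S := by
    simpa using hsum_mem_S (Finset.singleton_subset_iff.mpr hγ) (Finset.mem_singleton_self γ)
      (by simpa using hγΦ)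
  obtain ⟨F, hF, hmax⟩ := ({F ∈ B.powerset | P F}).exists_max_image Finset.card
    ⟨{γ}, by simp [P, hγ, hγΦ, hγS]⟩
  obtain ⟨hFB, hγF, hsum, hFS⟩ : F ⊆ B ∧ P F := by simpa using hF
  suffices F = B by rwa [← this]
  by_contra hne
  obtain ⟨a, haBF, hins⟩ := h.exists_sum_insert_mem hFB ⟨γ, hγF⟩ hne hsum
  obtain ⟨haB, haF⟩ := Finset.mem_sdiff.mp haBF
  have haS : a ∈ S := by
    have hdiff := S.sub_mem (hsum_mem_S (Finset.insert_subset haB hFB)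
      (Finset.mem_insert_of_mem hγF) hins) (hsum_mem_S hFB hγF hsum)
    rwa [Finset.sum_insert haF, add_sub_cancel_right] at hdiff
  have hcard := hmax (insert a F) <| Finset.mem_filter.mpr
    ⟨Finset.mem_powerset.mpr (Finset.insert_subset haB hFB), Finset.mem_insert_of_mem hγF, hins,
      by simpa [Set.insert_subset_iff] using ⟨haS, hFS⟩⟩
  rw [Finset.card_insert_of_notMem haF] at hcard
  omega

end IrreducibleRootSystemWithBase

/-- Let `Φ` be an irreducible root system with a fixed base `B` of simple
roots, and let `γ ∈ B`.  Then the set `D(γ)` of (positive) roots whose coefficient of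
`γ` in the expansion in simple roots is strictly positive generates the root lattice
(the subgroup of `V` generated by `B`). -/
theorem D_gamma_generates_root_lattice (V : Type*) [NormedAddCommGroup V]
    [InnerProductSpace ℝ V] (Φ B : Finset V)
    (h : IrreducibleRootSystemWithBase V Φ B) (γ : V) (hγ : γ ∈ B) :
    AddSubgroup.closure {β : V | β ∈ Φ ∧
        ∃ c : V → ℤ, β = ∑ α ∈ B, c α • α ∧ 0 < c γ}
      = AddSubgroup.closure (B : Set V) := by
  apply le_antisymm
  · rw [AddSubgroup.closure_le]
    rintro β ⟨-, c, rfl, -⟩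
    exact AddSubgroup.sum_mem _ fun α hα =>
      AddSubgroup.zsmul_mem _ (AddSubgroup.subset_closure hα) _
  · exact (AddSubgroup.closure_le _).mpr (h.base_subset_closure_rootsWithPosCoeff hγ)
end

section
/- Let Φ be a root system, and let F and T be subsets of Φ with Φ = F ∪ T, F ∩ T = ∅, F = −F, T = −T, and both F and T closed (i.e., if β, γ lie in the subset and β + γ ∈ Φ, then β + γ lies in the subset). If α and α' are simple roots (with respect to a fixed base) such that α + α' ∈ Φ and α ∈ F, then α' ∈ F. -/
open scoped RealInnerProductSpace

/-- A (finite, crystallographic) root system `Φ` in a real inner product space, together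
with a fixed base `B` of simple roots. -/
structure RootSystemWithBase (V : Type*) [NormedAddCommGroup V]
    [InnerProductSpace ℝ V] (Φ B : Finset V) : Prop where
  zero_not_mem : (0 : V) ∉ Φ
  base_subset : (B : Set V) ⊆ (Φ : Set V)
  base_indep : LinearIndependent ℝ (fun α : B => (α : V))
  reflect_mem : ∀ α ∈ Φ, ∀ β ∈ Φ, β - (2 * ⟪β, α⟫ / ⟪α, α⟫) • α ∈ Φ
  integrality : ∀ α ∈ Φ, ∀ β ∈ Φ, ∃ k : ℤ, 2 * ⟪β, α⟫ / ⟪α, α⟫ = (k : ℝ)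
  base_expand : ∀ β ∈ Φ, ∃ c : V → ℤ,
    β = ∑ α ∈ B, c α • α ∧ ((∀ α ∈ B, 0 ≤ c α) ∨ (∀ α ∈ B, c α ≤ 0))

/-!
If `α' ∈ T`, then `α + α'` lies in `F` or in `T`. In the first case `α' = -α + (α + α')` is a
sum of two elements of `F`, in the second `α = (α + α') + (-α')` is a sum of two elements of `T`;
either way `F ∩ T ≠ ∅`.
-/

section ClosedSymmetric

variable {G : Type*} [AddGroup G] {Φ S : Set G}

theorem right_mem_of_add_mem_of_closed (hsymm : ∀ x, x ∈ S ↔ -x ∈ S)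
    (hclosed : ∀ x ∈ S, ∀ y ∈ S, x + y ∈ Φ → x + y ∈ S) {x y : G}
    (hx : x ∈ S) (hxy : x + y ∈ S) (hy : y ∈ Φ) : y ∈ S := by
  have key := hclosed (-x) ((hsymm x).mp hx) (x + y) hxy
  rw [neg_add_cancel_left] at key
  exact key hy

theorem left_mem_of_add_mem_of_closed (hsymm : ∀ x, x ∈ S ↔ -x ∈ S)
    (hclosed : ∀ x ∈ S, ∀ y ∈ S, x + y ∈ Φ → x + y ∈ S) {x y : G}
    (hy : y ∈ S) (hxy : x + y ∈ S) (hx : x ∈ Φ) : x ∈ S := by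
  have key := hclosed (x + y) hxy (-y) ((hsymm y).mp hy)
  rw [add_neg_cancel_right] at key
  exact key hx

theorem right_mem_of_add_mem_of_closed_partition {F T : Set G} (hunion : F ∪ T = Φ)
    (hdisj : F ∩ T = ∅) (hFsymm : ∀ x, x ∈ F ↔ -x ∈ F) (hTsymm : ∀ x, x ∈ T ↔ -x ∈ T)
    (hFclosed : ∀ x ∈ F, ∀ y ∈ F, x + y ∈ Φ → x + y ∈ F)
    (hTclosed : ∀ x ∈ T, ∀ y ∈ T, x + y ∈ Φ → x + y ∈ T) {x y : G}
    (hx : x ∈ F) (hy : y ∈ Φ) (hxy : x + y ∈ Φ) : y ∈ F := by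
  rw [← hunion] at hxy
  rcases hxy with hxyF | hxyT
  · exact right_mem_of_add_mem_of_closed hFsymm hFclosed hx hxyF hy
  · by_contra hyF
    have hyT : y ∈ T := ((hunion ▸ hy : y ∈ F ∪ T)).resolve_left hyF
    have hxT := left_mem_of_add_mem_of_closed hTsymm hTclosed hyT hxyT (hunion ▸ Or.inl hx)
    exact (hdisj ▸ ⟨hx, hxT⟩ : x ∈ (∅ : Set G))

end ClosedSymmetric

theorem closed_symmetric_partition_connected_step_general (V : Type*) [NormedAddCommGroup V]
    [InnerProductSpace ℝ V] (Φ B : Finset V) (h : RootSystemWithBase V Φ B)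
    (F T : Set V)
    (hunion : F ∪ T = (Φ : Set V)) (hdisj : F ∩ T = ∅)
    (hFsymm : ∀ x, x ∈ F ↔ -x ∈ F) (hTsymm : ∀ x, x ∈ T ↔ -x ∈ T)
    (hFclosed : ∀ x ∈ F, ∀ y ∈ F, x + y ∈ (Φ : Set V) → x + y ∈ F)
    (hTclosed : ∀ x ∈ T, ∀ y ∈ T, x + y ∈ (Φ : Set V) → x + y ∈ T)
    (α α' : V) (hα' : α' ∈ B) (hsum : α + α' ∈ Φ) (hαF : α ∈ F) :
    α' ∈ F :=
  right_mem_of_add_mem_of_closed_partition hunion hdisj hFsymm hTsymm hFclosed hTclosed hαF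
    (h.base_subset hα') (Finset.mem_coe.mpr hsum)

/-- Let `Φ` be a root system, and `F, T ⊆ Φ` with `Φ = F ∪ T`,
`F ∩ T = ∅`, `F = -F`, `T = -T`, and both `F` and `T` closed.  If `α, α'` are simple
roots with `α + α' ∈ Φ` and `α ∈ F`, then `α' ∈ F`. -/
theorem closed_symmetric_partition_connected_step (V : Type*) [NormedAddCommGroup V]
    [InnerProductSpace ℝ V] (Φ B : Finset V) (h : RootSystemWithBase V Φ B)
    (F T : Set V)
    (hunion : F ∪ T = (Φ : Set V)) (hdisj : F ∩ T = ∅)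
    (hFsymm : ∀ x, x ∈ F ↔ -x ∈ F) (hTsymm : ∀ x, x ∈ T ↔ -x ∈ T)
    (hFclosed : ∀ x ∈ F, ∀ y ∈ F, x + y ∈ (Φ : Set V) → x + y ∈ F)
    (hTclosed : ∀ x ∈ T, ∀ y ∈ T, x + y ∈ (Φ : Set V) → x + y ∈ T)
    (α α' : V) (hα : α ∈ B) (hα' : α' ∈ B) (hsum : α + α' ∈ Φ) (hαF : α ∈ F) :
    α' ∈ F :=
  closed_symmetric_partition_connected_step_general V Φ B h F T hunion hdisj hFsymm hTsymm hFclosed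
    hTclosed α α' hα' hsum hαF
end

section
/- Let q ∈ ℂ* with q^2 ≠ 1 and q^4 ≠ 1, and for n ∈ ℤ set [n] = (q^n − q^{−n})/(q − q^{−1}). Let V = ℂ[X] and define linear operators on V by E X^a = −([a][a−1]/[2]) X^{a−2}, F X^a = (1/[2]) X^{a+2}, K X^a = q^{−(2a+1)} X^a, K' X^a = q^{2a+1} X^a. Then K K' = K' K = id, K E = q^4 E K, K F = q^{−4} F K, and E F − F E = (K − K')/(q^2 − q^{−2}). -/
/-!
On the monomial basis `K` and `K'` are diagonal with mutually inverse eigenvalues, while `E` and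
`F` shift the degree by `∓2`, which changes the eigenvalue `q^(-(2a+1))` of `K` by `q^(±4)`.
Hence `EF - FE` is diagonal too, and the commutator relation reduces to the quantum-integer
identity `[a+2][a+1] - [a][a-1] = [2][2a+1]`.
-/

/-- The quantum integer `[n] = (q^n - q^(-n))/(q - q⁻¹)` for `n : ℤ`. -/
noncomputable def qint (q : ℂ) (n : ℤ) : ℂ := (q ^ n - q ^ (-n)) / (q - q⁻¹)

open Polynomial

theorem Polynomial.linearMap_ext_X_pow {R M : Type*} [Semiring R] [AddCommMonoid M] [Module R M]
    {f g : R[X] →ₗ[R] M} (h : ∀ n : ℕ, f (X ^ n) = g (X ^ n)) : f = g :=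
  (basisMonomials R).ext fun n => by simpa [coe_basisMonomials, ← X_pow_eq_monomial] using h n

theorem sub_inv_ne_zero_of_sq_ne_one_s17 {K : Type*} [Field K] {x : K} (hx : x ≠ 0)
    (h : x ^ 2 ≠ 1) : x - x⁻¹ ≠ 0 := by
  intro h'
  apply h
  field_simp at h'
  linear_combination h'

theorem sub_inv_ne_zero_of_pow_four_ne_one {K : Type*} [Field K] {x : K} (hx : x ≠ 0)
    (h : x ^ 4 ≠ 1) : x - x⁻¹ ≠ 0 ∧ x ^ 2 - (x ^ 2)⁻¹ ≠ 0 := by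
  have h2 : x ^ 2 - (x ^ 2)⁻¹ ≠ 0 :=
    sub_inv_ne_zero_of_sq_ne_one_s17 (pow_ne_zero 2 hx) (by rwa [← pow_mul])
  refine ⟨left_ne_zero_of_mul (b := x + x⁻¹) ?_, h2⟩
  convert h2 using 1
  ring

theorem zpow_neg_two_mul_add_two_add_one {G : Type*} [GroupWithZero G] {q : G} (hq : q ≠ 0)
    (a : ℤ) : q ^ (-(2 * (a + 2) + 1)) = (q ^ 4)⁻¹ * q ^ (-(2 * a + 1)) := by
  rw [← zpow_natCast, ← zpow_neg, ← zpow_add₀ hq]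
  congr 1
  push_cast
  ring

theorem qint_zero (q : ℂ) : qint q 0 = 0 := by simp [qint]

theorem qint_mul_qint_sub_one_of_lt_two (q : ℂ) {a : ℕ} (ha : a < 2) :
    qint q a * qint q (a - 1) = 0 := by
  interval_cases a <;> simp [qint_zero]

theorem qint_two_ne_zero {q : ℂ} (hq : q ≠ 0) (hq4 : q ^ 4 ≠ 1) : qint q 2 ≠ 0 := by
  obtain ⟨h1, h2⟩ := sub_inv_ne_zero_of_pow_four_ne_one hq hq4
  simpa [qint] using div_ne_zero h2 h1

theorem qint_div_qint {q : ℂ} (h : q - q⁻¹ ≠ 0) (m n : ℤ) :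
    qint q m / qint q n = (q ^ m - q ^ (-m)) / (q ^ n - q ^ (-n)) :=
  div_div_div_cancel_right₀ h _ _

theorem qint_add_two_mul_qint_add_one_sub_qint_mul_qint_sub_one (q : ℂ) (n : ℤ) :
    qint q (n + 2) * qint q (n + 1) - qint q n * qint q (n - 1) =
      qint q 2 * qint q (2 * n + 1) := by
  rcases eq_or_ne q 0 with rfl | hq
  · simp [qint]
  simp only [qint, div_mul_div_comm, ← sub_div]
  congr 1
  simp only [two_mul, zpow_add₀ hq, zpow_sub₀ hq, zpow_neg, zpow_one]
  field_simp
  ring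

theorem qint_mul_sub_div_qint_two_sq {q : ℂ} (hq : q ≠ 0) (hq4 : q ^ 4 ≠ 1) (n : ℤ) :
    (qint q (n + 2) * qint q (n + 1) - qint q n * qint q (n - 1)) / qint q 2 ^ 2 =
      (q ^ (2 * n + 1) - q ^ (-(2 * n + 1))) / (q ^ 2 - (q ^ 2)⁻¹) := by
  obtain ⟨h1, -⟩ := sub_inv_ne_zero_of_pow_four_ne_one hq hq4
  rw [qint_add_two_mul_qint_add_one_sub_qint_mul_qint_sub_one, sq,
    mul_div_mul_left _ _ (qint_two_ne_zero hq hq4), qint_div_qint h1]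
  simp

theorem shale_weil_rank_one_relations_general (q : ℂ) (hq : q ≠ 0)
    (hq4 : q ^ 4 ≠ 1)
    (E F K K' : Polynomial ℂ →ₗ[ℂ] Polynomial ℂ)
    (hE : ∀ a : ℕ, E (X ^ a) =
      (-(qint q a * qint q ((a : ℤ) - 1) / qint q 2)) • X ^ (a - 2))
    (hF : ∀ a : ℕ, F (X ^ a) = ((qint q 2)⁻¹) • X ^ (a + 2))
    (hK : ∀ a : ℕ, K (X ^ a) = (q ^ (-(2 * (a : ℤ) + 1))) • X ^ a)
    (hK' : ∀ a : ℕ, K' (X ^ a) = (q ^ (2 * (a : ℤ) + 1)) • X ^ a) :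
    K ∘ₗ K' = LinearMap.id ∧ K' ∘ₗ K = LinearMap.id ∧
    K ∘ₗ E = (q ^ 4) • (E ∘ₗ K) ∧ K ∘ₗ F = (q ^ 4)⁻¹ • (F ∘ₗ K) ∧
    E ∘ₗ F - F ∘ₗ E = (q ^ 2 - (q ^ 2)⁻¹)⁻¹ • (K - K') := by
  have hE_lt_two : ∀ a < 2, E (X ^ a) = 0 := fun a ha => by
    simp [hE, qint_mul_qint_sub_one_of_lt_two q ha]
  have hE_add_two : ∀ a : ℕ, E (X ^ (a + 2)) =
      (-(qint q (a + 2) * qint q (a + 1) / qint q 2)) • X ^ a := fun a => by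
    rw [hE]; push_cast; ring_nf
  have hFE : ∀ a : ℕ, F (E (X ^ a)) =
      ((qint q 2)⁻¹ * -(qint q a * qint q (a - 1) / qint q 2)) • X ^ a := fun a => by
    rcases lt_or_ge a 2 with ha | ha
    · simp [hE_lt_two a ha, qint_mul_qint_sub_one_of_lt_two q ha]
    · rw [hE, map_smul, hF, Nat.sub_add_cancel ha, smul_smul, mul_comm]
  refine ⟨?_, ?_, ?_, ?_, ?_⟩ <;> refine linearMap_ext_X_pow fun a => ?_
  · simp [hK, hK', smul_smul, ← zpow_add₀ hq]
  · simp [hK, hK', smul_smul, ← zpow_add₀ hq]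
  · obtain ha | ⟨m, rfl⟩ : a < 2 ∨ ∃ m, a = m + 2 :=
      (lt_or_ge a 2).imp_right Nat.exists_eq_add_of_le'
    · simp [hE_lt_two a ha, hK]
    · simp only [LinearMap.comp_apply, LinearMap.smul_apply, hE_add_two, hK, map_smul, smul_smul]
      push_cast
      rw [zpow_neg_two_mul_add_two_add_one hq]
      field_simp
  · simp only [LinearMap.comp_apply, LinearMap.smul_apply, hF, hK, map_smul, smul_smul]
    push_cast
    rw [zpow_neg_two_mul_add_two_add_one hq, mul_left_comm, mul_comm (qint q 2)⁻¹]
  · simp only [LinearMap.sub_apply, LinearMap.comp_apply, LinearMap.smul_apply, hF, hFE, hK, hK',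
      map_smul, smul_smul, hE_add_two, ← sub_smul]
    congr 1
    linear_combination (-1 : ℂ) * qint_mul_sub_div_qint_two_sq hq hq4 a

/-- Let `q ∈ ℂ*` with `q^2 ≠ 1` and `q^4 ≠ 1`.  Let `V = ℂ[X]` and define
linear operators on `V` by `E X^a = -([a][a-1]/[2]) X^(a-2)`, `F X^a = (1/[2]) X^(a+2)`,
`K X^a = q^{-(2a+1)} X^a`, `K' X^a = q^{2a+1} X^a`.  Then `K K' = K' K = id`,
`K E = q^4 E K`, `K F = q^{-4} F K`, and `E F - F E = (K - K')/(q^2 - q^{-2})`. -/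
theorem shale_weil_rank_one_relations (q : ℂ) (hq : q ≠ 0)
    (hq2 : q ^ 2 ≠ 1) (hq4 : q ^ 4 ≠ 1)
    (E F K K' : Polynomial ℂ →ₗ[ℂ] Polynomial ℂ)
    (hE : ∀ a : ℕ, E (X ^ a) =
      (-(qint q a * qint q ((a : ℤ) - 1) / qint q 2)) • X ^ (a - 2))
    (hF : ∀ a : ℕ, F (X ^ a) = ((qint q 2)⁻¹) • X ^ (a + 2))
    (hK : ∀ a : ℕ, K (X ^ a) = (q ^ (-(2 * (a : ℤ) + 1))) • X ^ a)
    (hK' : ∀ a : ℕ, K' (X ^ a) = (q ^ (2 * (a : ℤ) + 1)) • X ^ a) :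
    K ∘ₗ K' = LinearMap.id ∧ K' ∘ₗ K = LinearMap.id ∧
    K ∘ₗ E = (q ^ 4) • (E ∘ₗ K) ∧ K ∘ₗ F = (q ^ 4)⁻¹ • (F ∘ₗ K) ∧
    E ∘ₗ F - F ∘ₗ E = (q ^ 2 - (q ^ 2)⁻¹)⁻¹ • (K - K') :=
  shale_weil_rank_one_relations_general q hq hq4 E F K K' hE hF hK hK'
end
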